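/- Let U ⊆ ℂ be open, let a, b, c, d ∈ ℂ with a·d − b·c = 1, set γ(z) = (a·z+b)/(c·z+d), and assume γ(z) ∈ U for all z ∈ U with c·z+d ≠ 0. Let λ ∈ ℂ, λ ≠ 0, and let E : ℂ → ℂ be analytic on U satisfying the weight-2 quasimodular transformation law E(γ(z)) = (c·z+d)²·E(z) + λ·c·(c·z+d) for all z ∈ U with c·z+d ≠ 0. Define H(z) = z + λ/E(z). Then for every z ∈ U with c·z+d ≠ 0, E(z) ≠ 0, E(γ(z)) ≠ 0, and c·H(z)+d ≠ 0, one has H(γ(z)) = (a·H(z) + b)/(c·H(z) + d). -/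

import Mathlib

/-!
Write `e = E z` and `w = H z = z + λ/e`. The transformation law factors as
`E(γz) = (cz+d)·e·(cw+d)`, while for a determinant-one Möbius map
`γz − γw = (z − w)/((cz+d)(cw+d))`. Since `z − w = −λ/e`, this says exactly
`γw = γz + λ/E(γz) = H(γz)`.
-/

section Mobius

variable {K : Type*} [Field K]

theorem mobius_sub_mobius {a b c d : K} (hdet : a * d - b * c = 1) {z w : K}
    (hz : c * z + d ≠ 0) (hw : c * w + d ≠ 0) :
    (a * z + b) / (c * z + d) - (a * w + b) / (c * w + d) =
      (z - w) / ((c * z + d) * (c * w + d)) := by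
  rw [div_sub_div _ _ hz hw]
  congr 1
  linear_combination (z - w) * hdet

theorem quasimodular_factor (c d z l : K) {e : K} (he : e ≠ 0) :
    (c * z + d) ^ 2 * e + l * c * (c * z + d) = (c * z + d) * e * (c * (z + l / e) + d) := by
  field_simp
  ring

theorem mobius_add_div_eq_mobius {a b c d : K} (hdet : a * d - b * c = 1) {z l e : K}
    (hz : c * z + d ≠ 0) (he : e ≠ 0) (hw : c * (z + l / e) + d ≠ 0) :
    (a * z + b) / (c * z + d) + l / ((c * z + d) ^ 2 * e + l * c * (c * z + d)) =
      (a * (z + l / e) + b) / (c * (z + l / e) + d) := by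
  rw [quasimodular_factor c d z l he, eq_comm, ← sub_eq_iff_eq_add', ← neg_sub,
    mobius_sub_mobius hdet hz hw]
  field_simp
  ring

end Mobius

theorem heins_nahm_equivariance
    (U : Set ℂ)
    (a b c d : ℂ) (hdet : a * d - b * c = 1)
    (γ : ℂ → ℂ) (hγ : γ = fun z => (a * z + b) / (c * z + d))
    (lam : ℂ)
    (E : ℂ → ℂ)
    (hquasi : ∀ z ∈ U, c * z + d ≠ 0 →
      E (γ z) = (c * z + d) ^ 2 * E z + lam * c * (c * z + d))
    (H : ℂ → ℂ) (hH : H = fun z => z + lam / E z) :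
    ∀ z ∈ U, c * z + d ≠ 0 → E z ≠ 0 → E (γ z) ≠ 0 → c * H z + d ≠ 0 →
      H (γ z) = (a * H z + b) / (c * H z + d) := by
  intro z hz hcd hEz _ hcH
  subst hH hγ
  simp only at hquasi hcH ⊢
  rw [hquasi z hz hcd]
  exact mobius_add_div_eq_mobius hdet hcd hEz hcH
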